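/- arXiv:2403.07318 — 2 statements merged into one kernel-verified Lean document; each statement's English description precedes it below -/
import Mathlib

section
/- Under the statistic setup, the statistic T_n is an unbiased estimator of the target quadratic form: E(T_n) = (Σ_{i=1}^q β_i μ_i)ᵀ W (Σ_{i=1}^q β_i μ_i). -/
/-!
Every summand of `T_n` pairs two *distinct* observations, so by independence it has expectation
`μ_iᵀ W μ_i'` (the expectation of a continuous bilinear form of two independent integrable vectors
is the form of the expectations). The weights `1 / (n_i n_i')` and `1 / (n_i (n_i - 1))` are the
reciprocals of the numbers of such pairs, so the between-group part of `T_n` has expectation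
`∑_{i ≠ i'} β_i β_i' μ_iᵀ W μ_i'` and the within-group part `∑_i β_i² μ_iᵀ W μ_i`; together these are
the expansion of `(∑ β_i μ_i)ᵀ W (∑ β_i μ_i)`.
-/

open MeasureTheory ProbabilityTheory Matrix
open scoped ProbabilityTheory

namespace MeasureTheory

variable {α E : Type*} [NormedAddCommGroup E] [NormedSpace ℝ E] {mα : MeasurableSpace α}
  {μ : Measure α}

/-- Integrability together with the value of the integral, so that linearity of the Bochner
integral (which takes the junk value `0` off integrable functions) can be chained. -/
def HasIntegral (f : α → E) (μ : Measure α) (a : E) : Prop :=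
  Integrable f μ ∧ ∫ x, f x ∂μ = a

namespace HasIntegral

variable {f g : α → E} {a b : E}

lemma integral_eq (h : HasIntegral f μ a) : ∫ x, f x ∂μ = a := h.2

lemma congr (h : HasIntegral f μ a) (hgf : ∀ x, g x = f x) : HasIntegral g μ a := by
  rwa [show g = f from funext hgf]

lemma add (hf : HasIntegral f μ a) (hg : HasIntegral g μ b) :
    HasIntegral (fun x => f x + g x) μ (a + b) :=
  ⟨hf.1.add hg.1, by rw [integral_add hf.1 hg.1, hf.2, hg.2]⟩

lemma finsetSum {ι : Type*} {s : Finset ι} {f : ι → α → E} {a : ι → E}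
    (h : ∀ i ∈ s, HasIntegral (f i) μ (a i)) :
    HasIntegral (fun x => ∑ i ∈ s, f i x) μ (∑ i ∈ s, a i) :=
  ⟨integrable_finsetSum s fun i hi => (h i hi).1, by
    rw [integral_finsetSum s fun i hi => (h i hi).1]
    exact Finset.sum_congr rfl fun i hi => (h i hi).2⟩

lemma const_mul {f : α → ℝ} {a : ℝ} (h : HasIntegral f μ a) (c : ℝ) :
    HasIntegral (fun x => c * f x) μ (c * a) :=
  ⟨h.1.const_mul c, by rw [integral_const_mul, h.2]⟩

lemma ite {p : Prop} [Decidable p] (h : p → HasIntegral f μ a) :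
    HasIntegral (fun x => if p then f x else 0) μ (if p then a else 0) := by
  by_cases hp : p
  · simpa [hp] using h hp
  · simp [hp, HasIntegral]

end HasIntegral

end MeasureTheory

lemma ProbabilityTheory.IndepFun.hasIntegral_dotProduct_mulVec {Ω m n : Type*}
    [Fintype m] [Fintype n] {mΩ : MeasurableSpace Ω} {μ : Measure Ω} {X : Ω → m → ℝ} {Y : Ω → n → ℝ}
    (hXY : IndepFun X Y μ) (hX : Integrable X μ) (hY : Integrable Y μ) (W : Matrix m n ℝ) :
    HasIntegral (fun ω => X ω ⬝ᵥ W *ᵥ Y ω) μ (μ[X] ⬝ᵥ W *ᵥ μ[Y]) := by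
  classical
  let B : (m → ℝ) →L[ℝ] (n → ℝ) →L[ℝ] ℝ := (Matrix.toLinearMap₂' ℝ W).toContinuousBilinearMap
  simpa [HasIntegral, B, Matrix.toLinearMap₂'_apply'] using
    And.intro (hXY.integrable_bilin hX hY B) (hXY.integral_bilin hX hY B)

lemma Matrix.sum_smul_dotProduct_mulVec_sum_smul {ι m n R : Type*} [Fintype m] [Fintype n]
    [CommSemiring R] (s : Finset ι) (a b : ι → R) (u : ι → m → R) (v : ι → n → R)
    (W : Matrix m n R) :
    (∑ i ∈ s, a i • u i) ⬝ᵥ W *ᵥ (∑ i ∈ s, b i • v i)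
      = ∑ i ∈ s, ∑ j ∈ s, a i * b j * (u i ⬝ᵥ W *ᵥ v j) := by
  simp only [mulVec_sum, mulVec_smul, sum_dotProduct, dotProduct_sum, smul_dotProduct,
    dotProduct_smul, smul_eq_mul, Finset.mul_sum]
  rw [Finset.sum_comm]
  exact Finset.sum_congr rfl fun i _ => Finset.sum_congr rfl fun j _ => by ring

lemma Finset.sum_sum_ite_ne_add_sum_diag {α M : Type*} [AddCommMonoid M] [DecidableEq α]
    (s : Finset α) (f : α → α → M) :
    (∑ i ∈ s, ∑ j ∈ s, if i ≠ j then f i j else 0) + ∑ i ∈ s, f i i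
      = ∑ i ∈ s, ∑ j ∈ s, f i j := by
  rw [← Finset.sum_add_distrib]
  refine Finset.sum_congr rfl fun i hi => ?_
  calc (∑ j ∈ s, if i ≠ j then f i j else 0) + f i i
      = (∑ j ∈ s, if i ≠ j then f i j else 0) + ∑ j ∈ s, if i = j then f i j else 0 := by
        rw [Finset.sum_ite_eq, if_pos hi]
    _ = ∑ j ∈ s, f i j := by
        rw [← Finset.sum_add_distrib]
        exact Finset.sum_congr rfl fun j _ => by by_cases h : i = j <;> simp [h]

lemma Finset.sum_sum_ite_ne_const {α R : Type*} [DecidableEq α] [CommRing R] (s : Finset α)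
    (c : R) :
    (∑ i ∈ s, ∑ j ∈ s, if i ≠ j then c else 0) = s.card * (s.card - 1) * c := by
  have := s.sum_sum_ite_ne_add_sum_diag fun _ _ => c
  simp only [Finset.sum_const, nsmul_eq_mul] at this
  linear_combination this

lemma sum_between_add_sum_within_eq_sum_sum {ι : Type*} [Fintype ι] [DecidableEq ι]
    (N : ι → ℕ) (hN : ∀ i, 2 ≤ N i) (β : ι → ℝ) (m : ι → ι → ℝ) :
    ((∑ i1, ∑ i2, if i1 ≠ i2 then β i1 * β i2 / ((N i1 : ℝ) * N i2) *
        ∑ _j1 : Fin (N i1), ∑ _j2 : Fin (N i2), m i1 i2 else 0) +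
      ∑ i, β i ^ 2 / ((N i : ℝ) * (N i - 1)) *
        ∑ j1 : Fin (N i), ∑ j2 : Fin (N i), if j1 ≠ j2 then m i i else 0)
      = ∑ i1, ∑ i2, β i1 * β i2 * m i1 i2 := by
  rw [← Finset.sum_sum_ite_ne_add_sum_diag _ fun i1 i2 => β i1 * β i2 * m i1 i2]
  have hN2 : ∀ i, (2 : ℝ) ≤ N i := fun i => by exact_mod_cast hN i
  have hN0 : ∀ i, (N i : ℝ) ≠ 0 := fun i => by linarith [hN2 i]
  have hN1 : ∀ i, (N i : ℝ) - 1 ≠ 0 := fun i => by linarith [hN2 i]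
  congr 1
  · refine Finset.sum_congr rfl fun i1 _ => ?_
    refine Finset.sum_congr rfl fun i2 _ => ?_
    split_ifs
    · simp only [Finset.sum_const, Finset.card_univ, Fintype.card_fin, nsmul_eq_mul]
      field_simp [hN0 i1, hN0 i2]
    · rfl
  · refine Finset.sum_congr rfl fun i _ => ?_
    rw [Finset.sum_sum_ite_ne_const, Finset.card_univ, Fintype.card_fin]
    field_simp [hN0 i, hN1 i]

theorem stmt_2_general
    {Ω : Type} [MeasureSpace Ω] [IsProbabilityMeasure (ℙ : Measure Ω)]
    (p q : ℕ)
    (N : Fin q → ℕ) (hN : ∀ i, 2 ≤ N i)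
    (x : (i : Fin q) → Fin (N i) → Ω → Fin p → ℝ)
    (hindep : ProbabilityTheory.iIndepFun
      (fun ij : (Σ i : Fin q, Fin (N i)) => x ij.1 ij.2) ℙ)
    (μv : Fin q → Fin p → ℝ)
    (hL2 : ∀ i j, MemLp (x i j) 2 ℙ)
    (hmean : ∀ i j k, ∫ ω, x i j ω k = μv i k)
    (β : Fin q → ℝ)
    (W : Matrix (Fin p) (Fin p) ℝ)
    (T1 T2 T : Ω → ℝ)
    (hT1 : ∀ ω, T1 ω = ∑ i1, ∑ i2, if i1 ≠ i2 then
        β i1 * β i2 / ((N i1 : ℝ) * (N i2 : ℝ)) *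
          ∑ j1, ∑ j2, x i1 j1 ω ⬝ᵥ W.mulVec (x i2 j2 ω) else 0)
    (hT2 : ∀ ω, T2 ω = ∑ i, β i ^ 2 / ((N i : ℝ) * ((N i : ℝ) - 1)) *
          ∑ j1, ∑ j2, if j1 ≠ j2 then x i j1 ω ⬝ᵥ W.mulVec (x i j2 ω) else 0)
    (hT : ∀ ω, T ω = T1 ω + T2 ω)
    :
    ∫ ω, T ω = (∑ i, β i • μv i) ⬝ᵥ W.mulVec (∑ i, β i • μv i) := by
  have hx : ∀ i j, Integrable (x i j) ℙ := fun i j => (hL2 i j).integrable one_le_two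
  have hmean' : ∀ i j, ℙ[x i j] = μv i := fun i j =>
    funext fun k => (eval_integral (hx i j).eval k).trans (hmean i j k)
  have hpair : ∀ a b : Σ i, Fin (N i), a ≠ b →
      HasIntegral (fun ω => x a.1 a.2 ω ⬝ᵥ W *ᵥ x b.1 b.2 ω) ℙ (μv a.1 ⬝ᵥ W *ᵥ μv b.1) :=
    fun a b hab => by
      simpa only [hmean'] using
        (hindep.indepFun hab).hasIntegral_dotProduct_mulVec (hx a.1 a.2) (hx b.1 b.2) W
  have h1 := HasIntegral.congr (HasIntegral.finsetSum fun i1 _ => .finsetSum fun i2 _ =>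
    .ite fun h => (HasIntegral.finsetSum fun j1 _ => .finsetSum fun j2 _ =>
      hpair ⟨i1, j1⟩ ⟨i2, j2⟩ fun e => h (congrArg Sigma.fst e)).const_mul _) hT1
  have h2 := HasIntegral.congr (HasIntegral.finsetSum fun i _ =>
    (HasIntegral.finsetSum fun j1 _ => .finsetSum fun j2 _ =>
      .ite fun h => hpair ⟨i, j1⟩ ⟨i, j2⟩ (by simpa using h)).const_mul _) hT2
  rw [((h1.add h2).congr hT).integral_eq, Matrix.sum_smul_dotProduct_mulVec_sum_smul]
  exact sum_between_add_sum_within_eq_sum_sum N hN β fun i1 i2 => μv i1 ⬝ᵥ W *ᵥ μv i2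

/-- under the statistic setup, `T_n` is an unbiased estimator of the target
quadratic form: `E(T_n) = (Σ βᵢ μᵢ)ᵀ W (Σ βᵢ μᵢ)`. -/
theorem stmt_2
    {Ω : Type} [MeasureSpace Ω] [IsProbabilityMeasure (ℙ : Measure Ω)]
    (p q : ℕ) (hq : 2 ≤ q)
    (N : Fin q → ℕ) (hN : ∀ i, 2 ≤ N i)
    (x : (i : Fin q) → Fin (N i) → Ω → Fin p → ℝ)
    (hmeas : ∀ i j, Measurable (x i j))
    (hindep : ProbabilityTheory.iIndepFun
      (fun ij : (Σ i : Fin q, Fin (N i)) => x ij.1 ij.2) ℙ)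
    (μv : Fin q → Fin p → ℝ)
    (Sig : Fin q → Matrix (Fin p) (Fin p) ℝ)
    (hL2 : ∀ i j, MemLp (x i j) 2 ℙ)
    (hmean : ∀ i j k, ∫ ω, x i j ω k = μv i k)
    (hcov : ∀ i j k l, ∫ ω, (x i j ω k - μv i k) * (x i j ω l - μv i l) = Sig i k l)
    (β : Fin q → ℝ)
    (W : Matrix (Fin p) (Fin p) ℝ) (hW : W.IsSymm)
    (T1 T2 T : Ω → ℝ)
    (hT1 : ∀ ω, T1 ω = ∑ i1, ∑ i2, if i1 ≠ i2 then
        β i1 * β i2 / ((N i1 : ℝ) * (N i2 : ℝ)) *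
          ∑ j1, ∑ j2, x i1 j1 ω ⬝ᵥ W.mulVec (x i2 j2 ω) else 0)
    (hT2 : ∀ ω, T2 ω = ∑ i, β i ^ 2 / ((N i : ℝ) * ((N i : ℝ) - 1)) *
          ∑ j1, ∑ j2, if j1 ≠ j2 then x i j1 ω ⬝ᵥ W.mulVec (x i j2 ω) else 0)
    (hT : ∀ ω, T ω = T1 ω + T2 ω)
    :
    ∫ ω, T ω = (∑ i, β i • μv i) ⬝ᵥ W.mulVec (∑ i, β i • μv i) :=
  stmt_2_general p q N hN x hindep μv hL2 hmean β W T1 T2 T hT1 hT2 hT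
end

section
/- Let W = Ω + α² 1_p 1_pᵀ with Ω = diag(ω_1²,…,ω_p²), 0 < ω_1 ≤ … ≤ ω_p, and α ∈ ℝ. Let Σ be a nonzero p×p real symmetric positive semidefinite matrix with largest eigenvalue λ_p*, let μ ∈ ℝ^p be the vector whose first d coordinates equal ν and whose remaining p−d coordinates equal 0 (1 ≤ d ≤ p, ν ∈ ℝ), and let D = sqrt( Σ_{i1≠i2} β_{i1}² β_{i2}²/(n_{i1} n_{i2}) + Σ_{i=1}^q β_i⁴/(n_i(n_i−1)) ) > 0 for real scalars β_1,…,β_q and integers n_i ≥ 2. Then μᵀWμ / ( sqrt(2 tr((WΣ)²)) · D ) ≥ ( α² d² ν² + ν² Σ_{i=1}^d ω_i² ) / ( sqrt( 2 λ_p*² ( Σ_{i=2}^p ω_i⁴ + ω_p⁴ + 2p ω_p² α² + p² α⁴ ) ) · D ). -/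
/-!
The numerator `μᵀWμ` is computed exactly. For the denominator, `Σ ≤ λ_p* • 1` and
`0 ≤ tr(AB)` for positive semidefinite `A, B` give
`tr((WΣ)²) = tr((WΣW)Σ) ≤ λ_p* tr(WΣW) = λ_p* tr(W²Σ) ≤ λ_p*² tr(W²)`,
and `tr(W²) = ∑ ωᵢ⁴ + 2α² ∑ ωᵢ² + p²α⁴` is bounded using `ωᵢ ≤ ω_p`. Since `W` is positive
definite and `Σ ≠ 0`, `tr((WΣ)²) = ‖√W Σ √W‖²_F > 0`, so enlarging the denominator to the
bound can only decrease the quotient.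
-/

open Matrix

namespace Matrix

open scoped MatrixOrder ComplexOrder

variable {n 𝕜 : Type*} [Fintype n] [DecidableEq n] [RCLike 𝕜]

theorem IsHermitian.le_smul_one_of_eigenvalues_le {S : Matrix n n 𝕜} (hS : S.IsHermitian)
    {lam : ℝ} (h : ∀ i, hS.eigenvalues i ≤ lam) : S ≤ lam • (1 : Matrix n n 𝕜) := by
  rw [← Algebra.algebraMap_eq_smul_one]
  refine le_algebraMap_of_spectrum_le (fun x hx => ?_) hS.isSelfAdjoint
  obtain ⟨i, rfl⟩ := hS.spectrum_real_eq_range_eigenvalues ▸ hx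
  exact h i

theorem PosSemidef.trace_mul_nonneg {A B : Matrix n n 𝕜} (hA : A.PosSemidef)
    (hB : B.PosSemidef) : 0 ≤ (A * B).trace := by
  set R := CFC.sqrt A
  have hR : Rᴴ = R := (CFC.sqrt_nonneg A).posSemidef.isHermitian
  have hRR : R * R = A := CFC.sqrt_mul_sqrt_self A hA.nonneg
  rw [← hRR, Matrix.mul_assoc, trace_mul_comm]
  simpa [hR, Matrix.mul_assoc] using (hB.mul_mul_conjTranspose_same R).trace_nonneg

theorem PosDef.trace_mul_mul_self_pos {W S : Matrix n n 𝕜} (hW : W.PosDef)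
    (hS : S.IsHermitian) (hS0 : S ≠ 0) : 0 < (W * S * (W * S)).trace := by
  set T := CFC.sqrt W
  have hT : Tᴴ = T := (CFC.sqrt_nonneg W).posSemidef.isHermitian
  have hTT : T * T = W := CFC.sqrt_mul_sqrt_self W hW.posSemidef.nonneg
  set N := T * S * T
  have hN : Nᴴ = N := by simp [N, hT, hS.eq, Matrix.mul_assoc]
  have htrace : (W * S * (W * S)).trace = (Nᴴ * N).trace := by
    rw [hN, ← hTT, show T * T * S * (T * T * S) = T * (T * S * T * T * S) by
      simp [Matrix.mul_assoc], trace_mul_comm]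
    simp [N, Matrix.mul_assoc]
  have hN0 : N ≠ 0 := by
    intro h0
    have : W * S * W = 0 := by
      rw [← hTT, show T * T * S * (T * T) = T * N * T by simp [N, Matrix.mul_assoc], h0]; simp
    rw [hW.isUnit.mul_left_eq_zero, hW.isUnit.mul_right_eq_zero] at this
    exact hS0 this
  rw [htrace]
  exact (posSemidef_conjTranspose_mul_self N).trace_nonneg.lt_of_ne'
    (by rwa [Ne, trace_conjTranspose_mul_self_eq_zero_iff])

theorem PosSemidef.trace_mul_le_of_le_smul_one {A S : Matrix n n 𝕜} (hA : A.PosSemidef)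
    {lam : ℝ} (hS : S ≤ lam • (1 : Matrix n n 𝕜)) : (A * S).trace ≤ lam • A.trace := by
  have := hA.trace_mul_nonneg hS
  rwa [Matrix.mul_sub, trace_sub, Matrix.mul_smul, Matrix.mul_one, trace_smul, sub_nonneg] at this

theorem IsHermitian.trace_mul_mul_self_le {W S : Matrix n n 𝕜} (hW : W.IsHermitian)
    (hS : S.PosSemidef) {lam : ℝ} (hlam : 0 ≤ lam) (hSle : S ≤ lam • (1 : Matrix n n 𝕜)) :
    (W * S * (W * S)).trace ≤ lam ^ 2 • (W * W).trace := by
  have hWSW : (W * S * W).PosSemidef := by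
    simpa only [hW.eq] using hS.mul_mul_conjTranspose_same W
  have hWW : (W * W).PosSemidef := by simpa only [hW.eq] using posSemidef_self_mul_conjTranspose W
  calc (W * S * (W * S)).trace = (W * S * W * S).trace := by simp only [Matrix.mul_assoc]
    _ ≤ lam • (W * S * W).trace := hWSW.trace_mul_le_of_le_smul_one hSle
    _ = lam • (W * W * S).trace := by rw [trace_mul_cycle]
    _ ≤ lam • lam • (W * W).trace :=
      smul_le_smul_of_nonneg_left (hWW.trace_mul_le_of_le_smul_one hSle) hlam
    _ = lam ^ 2 • (W * W).trace := by rw [smul_smul, sq]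

end Matrix

section DiagonalAddConst

variable {ι : Type*} [Fintype ι] [DecidableEq ι]

def diagonalAddConst (w : ι → ℝ) (c : ℝ) : Matrix ι ι ℝ :=
  diagonal w + c • vecMulVec (fun _ => 1) (fun _ => 1)

theorem dotProduct_diagonalAddConst_mulVec (w : ι → ℝ) (c : ℝ) (x y : ι → ℝ) :
    x ⬝ᵥ diagonalAddConst w c *ᵥ y = ∑ i, w i * x i * y i + c * (∑ i, x i) * ∑ i, y i := by
  simp only [diagonalAddConst, add_mulVec, smul_mulVec, vecMulVec_mulVec, op_smul_eq_smul,
    dotProduct_add, dotProduct_smul, smul_eq_mul]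
  simp only [dotProduct, mulVec_diagonal, mul_left_comm, one_mul, mul_one, Finset.mul_sum,
    mul_assoc, add_right_inj]
  simp only [← Finset.mul_sum]
  ring

theorem trace_diagonalAddConst_mul_self (w : ι → ℝ) (c : ℝ) :
    (diagonalAddConst w c * diagonalAddConst w c).trace
      = ∑ i, w i ^ 2 + 2 * c * ∑ i, w i + (Fintype.card ι : ℝ) ^ 2 * c ^ 2 := by
  simp only [diagonalAddConst, add_mul, mul_add, trace_add, smul_mul, trace_smul,
    diagonal_mul_diagonal, trace_diagonal]
  simp only [vecMulVec_mul, mul_vecMulVec, vecMulVec_mulVec, trace_vecMulVec, dotProduct,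
    vecMul_diagonal, mulVec_diagonal, one_mul, mul_one, smul_eq_mul, Algebra.mul_smul_comm,
    trace_smul, Finset.sum_const, Finset.card_univ, nsmul_eq_mul, MulOpposite.op_natCast,
    smul_vecMulVec, MulOpposite.smul_eq_mul_unop, MulOpposite.unop_natCast, sq]
  ring

theorem posDef_diagonalAddConst {w : ι → ℝ} (hw : ∀ i, 0 < w i) {c : ℝ} (hc : 0 ≤ c) :
    (diagonalAddConst w c).PosDef :=
  (PosDef.diagonal hw).add_posSemidef ((posSemidef_vecMulVec_self_star _).smul hc)

end DiagonalAddConst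

theorem Fin.sum_ite_val_lt {M : Type*} [AddCommMonoid M] {p d : ℕ} (hd : d ≤ p) (c : M) :
    ∑ i : Fin p, (if i.val < d then c else 0) = d • c := by
  rw [Finset.sum_ite, Finset.sum_const_zero, add_zero, Finset.sum_const, Fin.card_filter_val_lt,
    min_eq_right hd]

theorem Fin.sum_eq_add_sum_ite_one_le {M : Type*} [AddCommMonoid M] {p : ℕ} (hp : 1 ≤ p)
    (f : Fin p → M) : ∑ i, f i = f ⟨0, hp⟩ + ∑ i : Fin p, if 1 ≤ i.val then f i else 0 := by
  rw [← Finset.add_sum_erase _ _ (Finset.mem_univ ⟨0, hp⟩), Finset.sum_ite, Finset.sum_const_zero,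
    add_zero]
  congr 2
  ext i
  simp [Fin.ext_iff, Nat.one_le_iff_ne_zero]

theorem trace_diagonalAddConst_mul_self_le {p : ℕ} (hp : 1 ≤ p) {ω : Fin p → ℝ} (hω : ∀ i, 0 ≤ ω i)
    (hmono : Monotone ω) (α : ℝ) :
    (diagonalAddConst (fun i => ω i ^ 2) (α ^ 2) * diagonalAddConst (fun i => ω i ^ 2) (α ^ 2)).trace
      ≤ (∑ i : Fin p, if 1 ≤ i.val then ω i ^ 4 else 0)
        + ω ⟨p - 1, by omega⟩ ^ 4 + 2 * (p : ℝ) * ω ⟨p - 1, by omega⟩ ^ 2 * α ^ 2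
        + (p : ℝ) ^ 2 * α ^ 4 := by
  set ωmax := ω ⟨p - 1, by omega⟩
  have hle (i : Fin p) : ω i ≤ ωmax := hmono (Fin.mk_le_mk.mpr (by omega))
  have hfirst : ω ⟨0, hp⟩ ^ 4 ≤ ωmax ^ 4 := pow_le_pow_left₀ (hω _) (hle _) 4
  have hsum : ∑ i, ω i ^ 2 ≤ p * ωmax ^ 2 := by
    simpa using Finset.sum_le_card_nsmul Finset.univ _ _ fun i _ => pow_le_pow_left₀ (hω i) (hle i) 2
  have hsq (x : ℝ) : (x ^ 2) ^ 2 = x ^ 4 := by ring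
  simp only [trace_diagonalAddConst_mul_self, Fintype.card_fin, hsq]
  rw [Fin.sum_eq_add_sum_ite_one_le hp]
  nlinarith [mul_le_mul_of_nonneg_left hsum (sq_nonneg α)]

/-- lower bound for the signal-to-noise ratio under weakly dense signals:
with `W = Ω + α² 1ₚ1ₚᵀ`, `Σ` a nonzero PSD matrix with largest eigenvalue `λ_p*`, `μ` having
its first `d` coordinates equal to `ν` and the rest `0`, and `D` the sample-size factor,
`μᵀWμ / (√(2 tr((WΣ)²)) D) ≥ (α²d²ν² + ν² Σ_{i≤d} ωᵢ²) /
 (√(2 λ_p*² (Σ_{i=2}^p ωᵢ⁴ + ω_p⁴ + 2pω_p²α² + p²α⁴)) D)`. -/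
theorem stmt_9 (p : ℕ) (hp : 1 ≤ p)
    (ω : Fin p → ℝ) (hpos : ∀ i, 0 < ω i) (hmono : Monotone ω)
    (α : ℝ)
    (W : Matrix (Fin p) (Fin p) ℝ)
    (hWdef : W = Matrix.diagonal (fun i => ω i ^ 2)
        + α ^ 2 • Matrix.vecMulVec (fun _ : Fin p => (1 : ℝ)) (fun _ => 1))
    (S : Matrix (Fin p) (Fin p) ℝ) (hS : S.PosSemidef) (hSne : S ≠ 0)
    (lam : ℝ) (hlam : lam = ⨆ i, hS.1.eigenvalues i)
    (ν : ℝ) (d : ℕ) (hdp : d ≤ p)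
    (μ : Fin p → ℝ) (hμ : ∀ i : Fin p, μ i = if i.val < d then ν else 0)
    (D : ℝ)
    (hDpos : 0 < D) :
    (α ^ 2 * (d : ℝ) ^ 2 * ν ^ 2 + ν ^ 2 * ∑ i : Fin p, (if i.val < d then ω i ^ 2 else 0))
        / (Real.sqrt (2 * lam ^ 2 *
            ((∑ i : Fin p, if 1 ≤ i.val then ω i ^ 4 else 0)
              + ω ⟨p - 1, by omega⟩ ^ 4 + 2 * (p : ℝ) * ω ⟨p - 1, by omega⟩ ^ 2 * α ^ 2
              + (p : ℝ) ^ 2 * α ^ 4)) * D)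
      ≤ (μ ⬝ᵥ W.mulVec μ) / (Real.sqrt (2 * ((W * S) * (W * S)).trace) * D) := by
  change W = diagonalAddConst (fun i => ω i ^ 2) (α ^ 2) at hWdef
  have hnum : μ ⬝ᵥ W *ᵥ μ
      = α ^ 2 * (d : ℝ) ^ 2 * ν ^ 2 + ν ^ 2 * ∑ i : Fin p, (if i.val < d then ω i ^ 2 else 0) := by
    simp only [hWdef, dotProduct_diagonalAddConst_mulVec, hμ, Fin.sum_ite_val_lt hdp, nsmul_eq_mul,
      Finset.mul_sum]
    rw [add_comm]
    congr 1
    · ring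
    · exact Finset.sum_congr rfl fun i _ => by split_ifs <;> ring
  have hev (i : Fin p) : hS.1.eigenvalues i ≤ lam :=
    hlam ▸ le_ciSup (Set.finite_range _).bddAbove i
  have hlam0 : 0 ≤ lam := (hS.eigenvalues_nonneg ⟨0, hp⟩).trans (hev _)
  have hWpd : W.PosDef := hWdef ▸ posDef_diagonalAddConst (fun i => pow_pos (hpos i) 2) (sq_nonneg α)
  have htrace_le := (hWpd.1.trace_mul_mul_self_le hS hlam0
    (hS.1.le_smul_one_of_eigenvalues_le hev)).trans (mul_le_mul_of_nonneg_left
      (hWdef ▸ trace_diagonalAddConst_mul_self_le hp (fun i => (hpos i).le) hmono α) (sq_nonneg lam))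
  have htrace_pos := hWpd.trace_mul_mul_self_pos hS.1 hSne
  rw [hnum]
  gcongr _ / (Real.sqrt ?_ * _)
  linarith
end
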